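/- arXiv:2202.08636 — 3 statements merged into one kernel-verified Lean document; each statement's English description precedes it below -/
import Mathlib

section
/- Fix an integer n ≥ 1 and a real t > 0. For a : Fin (n+1) → ℝ define J(a) as the Lebesgue integral over the region {s ∈ ℝ^n : s_i > 0 for all i and ∑_{i=0}^{n−1} s_i < t} of exp(∑_{i=0}^{n−1} a_i s_i + a_n·(t − ∑_{i=0}^{n−1} s_i)). Then J(a ∘ σ) = J(a) for every permutation σ of {0,1,…,n}. -/
/-!
Put `s_n = t - ∑_{i<n} s_i`. Then the integrand is `exp (∑_{j ≤ n} a_j s_j)` and the domain is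
`{s | ∀ j ≤ n, 0 < s_j}`, both symmetric in the `n + 1` coordinates. Permuting `(s_0, …, s_n)` by
`σ` and dropping the last coordinate is an affine bijection `Φ_σ` of `ℝ^n` that maps the domain
onto itself, and `σ ↦ Φ_σ` is an action. Hence the determinant of the linear part of `Φ_σ` is a
homomorphism from the finite group of permutations to `ℝ`, so its absolute value is `1`: `Φ_σ`
preserves Lebesgue measure, and the change of variables `s ↦ Φ_σ s` gives `J(a ∘ σ) = J(a)`.
-/

open MeasureTheory

/-- The exponential integral over the open simplex
`{s ∈ ℝ^n : s_i > 0 ∀ i, ∑_{i<n} s_i < t}` of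
`exp(∑_{i<n} a_i s_i + a_n (t - ∑_{i<n} s_i))`. -/
noncomputable def simplexExpIntegral (n : ℕ) (t : ℝ) (a : Fin (n + 1) → ℝ) : ℝ :=
  ∫ s in {s : Fin n → ℝ | (∀ i, 0 < s i) ∧ (∑ i, s i) < t},
    Real.exp ((∑ i : Fin n, a i.castSucc * s i) + a (Fin.last n) * (t - ∑ i, s i))

theorem MonoidHom.abs_apply_eq_one_of_finite {G R : Type*} [LeftCancelMonoid G] [Finite G]
    [Ring R] [LinearOrder R] [IsStrictOrderedRing R] (f : G →* R) (g : G) : |f g| = 1 :=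
  ((absHom.toMonoidHom.comp f).isOfFinOrder (isOfFinOrder_of_finite g)).eq_one (abs_nonneg _)

theorem LinearMap.measurePreserving_of_abs_det_eq_one {E : Type*} [NormedAddCommGroup E]
    [NormedSpace ℝ E] [MeasurableSpace E] [BorelSpace E] [FiniteDimensional ℝ E]
    (μ : Measure E) [μ.IsAddHaarMeasure] {f : E →ₗ[ℝ] E} (hf : |LinearMap.det f| = 1) :
    MeasurePreserving f μ μ := by
  refine ⟨f.continuous_of_finiteDimensional.measurable, ?_⟩
  rw [Measure.map_linearMap_addHaar_eq_smul_addHaar μ (by simp [← abs_ne_zero, hf]), abs_inv, hf,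
    inv_one, ENNReal.ofReal_one, one_smul]

namespace SimplexExpIntegral

variable {n : ℕ}

def simplexCoords (t : ℝ) (s : Fin n → ℝ) : Fin (n + 1) → ℝ :=
  Fin.snoc s (t - ∑ i, s i)

@[simp]
lemma simplexCoords_castSucc (t : ℝ) (s : Fin n → ℝ) (i : Fin n) :
    simplexCoords t s i.castSucc = s i :=
  Fin.snoc_castSucc _ _ _

@[simp]
lemma simplexCoords_last (t : ℝ) (s : Fin n → ℝ) :
    simplexCoords t s (Fin.last n) = t - ∑ i, s i :=
  Fin.snoc_last _ _

lemma sum_simplexCoords (t : ℝ) (s : Fin n → ℝ) : ∑ j, simplexCoords t s j = t := by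
  simp [Fin.sum_univ_castSucc]

lemma simplexCoords_init {t : ℝ} {x : Fin (n + 1) → ℝ} (hx : ∑ j, x j = t) :
    simplexCoords t (Fin.init x) = x := by
  conv_rhs => rw [← Fin.snoc_init_self x]
  rw [simplexCoords, ← hx, Fin.sum_univ_castSucc]
  simp [Fin.init]

lemma simplexCoords_add (t u : ℝ) (s r : Fin n → ℝ) :
    simplexCoords (t + u) (s + r) = simplexCoords t s + simplexCoords u r := by
  refine funext (Fin.lastCases ?_ fun i => ?_)
  · simp [Finset.sum_add_distrib]
    ring
  · simp

lemma simplexCoords_smul (c t : ℝ) (s : Fin n → ℝ) :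
    simplexCoords (c * t) (c • s) = c • simplexCoords t s := by
  refine funext (Fin.lastCases ?_ fun i => ?_)
  · simp [← Finset.mul_sum, mul_sub]
  · simp

def simplexPerm (t : ℝ) (σ : Equiv.Perm (Fin (n + 1))) (s : Fin n → ℝ) : Fin n → ℝ :=
  Fin.init (simplexCoords t s ∘ σ.symm)

lemma simplexCoords_simplexPerm (t : ℝ) (σ : Equiv.Perm (Fin (n + 1))) (s : Fin n → ℝ) :
    simplexCoords t (simplexPerm t σ s) = simplexCoords t s ∘ σ.symm :=
  simplexCoords_init <| (Equiv.sum_comp σ.symm _).trans (sum_simplexCoords t s)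

lemma simplexPerm_mul (t : ℝ) (σ τ : Equiv.Perm (Fin (n + 1))) :
    simplexPerm t (σ * τ) = simplexPerm t σ ∘ simplexPerm t τ := by
  ext s : 1
  rw [Function.comp_apply, simplexPerm, simplexPerm, simplexCoords_simplexPerm]
  rfl

lemma simplexPerm_one (t : ℝ) : simplexPerm t (1 : Equiv.Perm (Fin (n + 1))) = id := by
  ext s : 1
  simp [simplexPerm, simplexCoords, Equiv.Perm.one_def]

lemma simplexPerm_add (t u : ℝ) (σ : Equiv.Perm (Fin (n + 1))) (s r : Fin n → ℝ) :
    simplexPerm (t + u) σ (s + r) = simplexPerm t σ s + simplexPerm u σ r := by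
  ext i
  simp [simplexPerm, Fin.init, simplexCoords_add]

lemma simplexPerm_smul (c t : ℝ) (σ : Equiv.Perm (Fin (n + 1))) (s : Fin n → ℝ) :
    simplexPerm (c * t) σ (c • s) = c • simplexPerm t σ s := by
  ext i
  simp [simplexPerm, Fin.init, simplexCoords_smul]

def simplexPermLinear (σ : Equiv.Perm (Fin (n + 1))) : (Fin n → ℝ) →ₗ[ℝ] (Fin n → ℝ) where
  toFun := simplexPerm 0 σ
  map_add' s r := by simpa using simplexPerm_add 0 0 σ s r
  map_smul' c s := by simpa using simplexPerm_smul c 0 σ s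

@[simp]
lemma simplexPermLinear_apply (σ : Equiv.Perm (Fin (n + 1))) (s : Fin n → ℝ) :
    simplexPermLinear σ s = simplexPerm 0 σ s :=
  rfl

lemma simplexPerm_eq_add_linear (t : ℝ) (σ : Equiv.Perm (Fin (n + 1))) (s : Fin n → ℝ) :
    simplexPerm t σ s = simplexPerm t σ 0 + simplexPermLinear σ s := by
  simpa using simplexPerm_add t 0 σ 0 s

noncomputable def simplexPermDet : Equiv.Perm (Fin (n + 1)) →* ℝ where
  toFun σ := LinearMap.det (simplexPermLinear σ)
  map_one' := by
    rw [← LinearMap.det_id (A := ℝ) (M := Fin n → ℝ)]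
    exact congrArg LinearMap.det (LinearMap.ext fun s => congrFun (simplexPerm_one 0) s)
  map_mul' σ τ := by
    rw [← LinearMap.det_comp]
    exact congrArg LinearMap.det (LinearMap.ext fun s => congrFun (simplexPerm_mul 0 σ τ) s)

lemma measurePreserving_simplexPerm (t : ℝ) (σ : Equiv.Perm (Fin (n + 1))) :
    MeasurePreserving (simplexPerm t σ) := by
  have hlin : MeasurePreserving (simplexPermLinear σ) :=
    LinearMap.measurePreserving_of_abs_det_eq_one volume
      (simplexPermDet.abs_apply_eq_one_of_finite σ)
  rw [funext (simplexPerm_eq_add_linear t σ)]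
  exact (measurePreserving_add_left volume _).comp hlin

noncomputable def simplexPermEquiv (t : ℝ) (σ : Equiv.Perm (Fin (n + 1))) :
    (Fin n → ℝ) ≃ᵐ (Fin n → ℝ) where
  toFun := simplexPerm t σ
  invFun := simplexPerm t σ⁻¹
  left_inv s := by
    rw [← Function.comp_apply (f := simplexPerm t σ⁻¹), ← simplexPerm_mul, inv_mul_cancel,
      simplexPerm_one, id]
  right_inv s := by
    rw [← Function.comp_apply (f := simplexPerm t σ), ← simplexPerm_mul, mul_inv_cancel,
      simplexPerm_one, id]
  measurable_toFun := (measurePreserving_simplexPerm t σ).measurable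
  measurable_invFun := (measurePreserving_simplexPerm t σ⁻¹).measurable

lemma simplexExpIntegral_eq_setIntegral (t : ℝ) (a : Fin (n + 1) → ℝ) :
    simplexExpIntegral n t a =
      ∫ s in {s | ∀ j, 0 < simplexCoords t s j}, Real.exp (∑ j, a j * simplexCoords t s j) := by
  have hD : {s : Fin n → ℝ | (∀ i, 0 < s i) ∧ (∑ i, s i) < t} =
      {s | ∀ j, 0 < simplexCoords t s j} := by
    ext s
    simp [Fin.forall_fin_succ']
  simp [simplexExpIntegral, hD, Fin.sum_univ_castSucc]

end SimplexExpIntegral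

open SimplexExpIntegral

theorem simplexExpIntegral_perm_general (n : ℕ) (t : ℝ)
    (a : Fin (n + 1) → ℝ) (σ : Equiv.Perm (Fin (n + 1))) :
    simplexExpIntegral n t (a ∘ σ) = simplexExpIntegral n t a := by
  have hdomain : simplexPerm t σ ⁻¹' {s | ∀ j, 0 < simplexCoords t s j} =
      {s | ∀ j, 0 < simplexCoords t s j} := by
    ext s
    simpa only [Set.mem_preimage, Set.mem_ofPred_eq, simplexCoords_simplexPerm,
      Function.comp_apply] using (σ.forall_congr_left (p := fun j => 0 < simplexCoords t s j)).symm
  have hexponent (s : Fin n → ℝ) : ∑ j, a j * simplexCoords t (simplexPerm t σ s) j =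
      ∑ j, (a ∘ σ) j * simplexCoords t s j := by
    rw [simplexCoords_simplexPerm, ← Equiv.sum_comp σ]
    simp
  rw [simplexExpIntegral_eq_setIntegral, simplexExpIntegral_eq_setIntegral,
    ← (measurePreserving_simplexPerm t σ).setIntegral_preimage_emb
      (simplexPermEquiv t σ).measurableEmbedding
      (fun y => Real.exp (∑ j, a j * simplexCoords t y j)), hdomain]
  simp_rw [hexponent]

/-- The simplex exponential integral is invariant under permutations of the
coefficient vector `a`. -/
theorem simplexExpIntegral_perm (n : ℕ) (hn : 1 ≤ n) (t : ℝ) (ht : 0 < t)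
    (a : Fin (n + 1) → ℝ) (σ : Equiv.Perm (Fin (n + 1))) :
    simplexExpIntegral n t (a ∘ σ) = simplexExpIntegral n t a :=
  simplexExpIntegral_perm_general n t a σ
end

section
/- Let d, w, u, s be real numbers with s ≥ 0, u > 0 and w − d > e (where e = exp(1)). Then (w + u − d) − s·log(w + u − d) ≥ ((w + u − d)/(w − d)) · ((w − d) − s·log(w − d)). -/
/-- For `s ≥ 0`, `u > 0` and `w - d > e`,
`(w+u-d) - s log(w+u-d) ≥ ((w+u-d)/(w-d)) ((w-d) - s log(w-d))`. -/
theorem shifted_log_ineq (d w u s : ℝ) (hs : 0 ≤ s) (hu : 0 < u)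
    (hw : Real.exp 1 < w - d) :
    ((w + u - d) / (w - d)) * ((w - d) - s * Real.log (w - d)) ≤
      (w + u - d) - s * Real.log (w + u - d) := by
  set a := w - d with ha_def
  set b := w + u - d with hb_def
  have hab : a < b := by simp only [ha_def, hb_def]; linarith
  have ha : 0 < a := lt_trans (Real.exp_pos 1) hw
  have hb : 0 < b := lt_trans ha hab
  have key : Real.log b / b ≤ Real.log a / a :=
    Real.log_div_self_antitoneOn (le_of_lt hw) (le_of_lt (lt_trans hw hab)) hab.le
  have : s * Real.log b ≤ s * (b * (Real.log a / a)) := by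
    apply mul_le_mul_of_nonneg_left _ hs
    calc Real.log b = b * (Real.log b / b) := by field_simp
      _ ≤ b * (Real.log a / a) := by
          exact mul_le_mul_of_nonneg_left key hb.le
  have expand : (b / a) * (a - s * Real.log a) = b - s * (b * (Real.log a / a)) := by
    field_simp
  rw [expand]
  linarith
end

section
/- Let d, w, u, s, δ be real numbers with s ≥ 0, u > 0, w − d > e (where e = exp(1)), 0 < δ < 1/2, and suppose (w − d) − s·log(w − d) > 0. If (w + u − d) − s·log(w + u − d) < (1/(1 − 2δ)) · ((w − d) − s·log(w − d)), then (w − d)/(w + u − d) > 1 − 2δ. -/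
/-! With `g y = y - s log y`, the ratio `g y / y = 1 - s · (log y / y)` is nondecreasing on
`[e, ∞)`, so `g (w + u - d) ≥ (w + u - d) / (w - d) · g (w - d)`. Comparing with the hypothesis
and dividing by `g (w - d) > 0` gives `(w + u - d) / (w - d) < 1 / (1 - 2δ)`. -/

open Real Set

theorem sub_mul_log_div_self_monotoneOn {s : ℝ} (hs : 0 ≤ s) :
    MonotoneOn (fun y => (y - s * log y) / y) (Ici (exp 1)) := by
  intro x hx y hy hxy
  have hx0 : 0 < x := (exp_pos 1).trans_le hx
  have hy0 : 0 < y := (exp_pos 1).trans_le hy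
  have hlog : log y / y ≤ log x / x := log_div_self_antitoneOn hx hy hxy
  calc (x - s * log x) / x = 1 - s * (log x / x) := by field_simp
    _ ≤ 1 - s * (log y / y) := by gcongr
    _ = (y - s * log y) / y := by field_simp

theorem gap_claim_one_general (d w u s δ : ℝ) (hs : 0 ≤ s) (hu : 0 < u)
    (hw : Real.exp 1 < w - d) (hδ : δ < 1 / 2)
    (hpos : 0 < (w - d) - s * Real.log (w - d))
    (h : (w + u - d) - s * Real.log (w + u - d) <
      (1 / (1 - 2 * δ)) * ((w - d) - s * Real.log (w - d))) :
    1 - 2 * δ < (w - d) / (w + u - d) := by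
  set a := w - d
  set b := w + u - d
  set c := 1 - 2 * δ
  have ha : 0 < a := (exp_pos 1).trans hw
  have hab : a ≤ b := by linarith
  have hb : 0 < b := ha.trans_le hab
  have hc : 0 < c := by linarith
  have hmono : (a - s * log a) / a ≤ (b - s * log b) / b :=
    sub_mul_log_div_self_monotoneOn hs hw.le (hw.le.trans hab) hab
  have hratio : (a - s * log a) / a < (a - s * log a) / (c * b) := by
    calc (a - s * log a) / a ≤ (b - s * log b) / b := hmono
      _ < 1 / c * (a - s * log a) / b := by gcongr
      _ = (a - s * log a) / (c * b) := by field_simp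
  have hcb : c * b < a := (div_lt_div_iff_of_pos_left hpos ha (by positivity)).mp hratio
  rwa [lt_div_iff₀ hb]

/-- Claim 1 of the gap lemma: if `s ≥ 0`, `u > 0`, `w - d > e`, `0 < δ < 1/2`,
`(w-d) - s log(w-d) > 0` and
`(w+u-d) - s log(w+u-d) < (1/(1-2δ)) ((w-d) - s log(w-d))`,
then `(w-d)/(w+u-d) > 1 - 2δ`. -/
theorem gap_claim_one (d w u s δ : ℝ) (hs : 0 ≤ s) (hu : 0 < u)
    (hw : Real.exp 1 < w - d) (hδ0 : 0 < δ) (hδ : δ < 1 / 2)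
    (hpos : 0 < (w - d) - s * Real.log (w - d))
    (h : (w + u - d) - s * Real.log (w + u - d) <
      (1 / (1 - 2 * δ)) * ((w - d) - s * Real.log (w - d))) :
    1 - 2 * δ < (w - d) / (w + u - d) :=
  gap_claim_one_general d w u s δ hs hu hw hδ hpos h
end
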